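/- For |j| ≥ 1 and κ > 0, the function r ↦ K_{|j|}(κ r) is not square integrable on (0,∞) with respect to the measure r dr. -/

import Mathlib

/-- Modified Bessel function of the second kind of (real) order `ν`, for positive
argument, defined by the integral representation
`K_ν(x) = ∫₀^∞ exp(−x cosh t) cosh(ν t) dt`. -/
noncomputable def besselK (ν x : ℝ) : ℝ :=
  ∫ t in Set.Ioi (0 : ℝ), Real.exp (-x * Real.cosh t) * Real.cosh (ν * t)

/-!
For `|ν| ≥ 1` we have `cosh (ν t) ≥ cosh t ≥ sinh t`, and `exp (-x cosh t) sinh t` is the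
derivative of `-exp (-x cosh t) / x`, so `K_ν(x) ≥ exp (-x) / x`. Hence
`K_ν(κ r)² r ≥ c / r` near `r = 0`, and `1 / r` is not integrable at `0`.
-/

open Real Set MeasureTheory Filter

namespace Real

lemma cosh_le_exp_abs (x : ℝ) : cosh x ≤ exp |x| := by
  rw [← cosh_abs, cosh_eq]
  linarith [exp_le_exp.2 (neg_le_self (abs_nonneg x))]

lemma exp_div_two_le_cosh (x : ℝ) : exp x / 2 ≤ cosh x := by
  rw [cosh_eq]
  linarith [exp_pos (-x)]

lemma tendsto_cosh_atTop : Tendsto cosh atTop atTop :=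
  tendsto_atTop_mono exp_div_two_le_cosh (tendsto_exp_atTop.atTop_div_const two_pos)

end Real

lemma exp_neg_mul_cosh_mul_cosh_le (ν : ℝ) {x t : ℝ} (hx : 0 < x) (ht : 0 ≤ t) :
    exp (-x * cosh t) * cosh (ν * t) ≤ exp ((|ν| + 1) ^ 2 / x) * exp (-1 * t) := by
  have hcosh_νt : cosh (ν * t) ≤ exp (|ν| * t) := by
    simpa only [abs_mul, abs_of_nonneg ht] using cosh_le_exp_abs (ν * t)
  have hcosh_t : t ^ 2 / 4 ≤ cosh t := by
    linarith [quadratic_le_exp_of_nonneg ht, exp_div_two_le_cosh t]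
  -- `x t² / 4 - (|ν| + 1) t + (|ν| + 1)² / x` is the square `(x t / 2 - (|ν| + 1))² / x`
  have hexponent : -x * cosh t + |ν| * t ≤ (|ν| + 1) ^ 2 / x + -1 * t := by
    have hsq : 0 ≤ (x * t / 2 - (|ν| + 1)) ^ 2 / x := by positivity
    have hid : (x * t / 2 - (|ν| + 1)) ^ 2 / x = x * (t ^ 2 / 4) - (|ν| + 1) * t
        + (|ν| + 1) ^ 2 / x := by
      field_simp
      ring
    nlinarith [mul_le_mul_of_nonneg_left hcosh_t hx.le]
  calc exp (-x * cosh t) * cosh (ν * t) ≤ exp (-x * cosh t) * exp (|ν| * t) := by gcongr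
    _ ≤ exp ((|ν| + 1) ^ 2 / x) * exp (-1 * t) := by
      rw [← exp_add, ← exp_add]
      exact exp_le_exp.2 hexponent

lemma integrableOn_exp_neg_mul_cosh_mul_cosh (ν : ℝ) {x : ℝ} (hx : 0 < x) :
    IntegrableOn (fun t => exp (-x * cosh t) * cosh (ν * t)) (Ioi 0) := by
  refine ((exp_neg_integrableOn_Ioi 0 one_pos).const_mul (exp ((|ν| + 1) ^ 2 / x))).mono'
    (by fun_prop) ?_
  filter_upwards [ae_restrict_mem measurableSet_Ioi] with t ht
  rw [norm_of_nonneg (by positivity)]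
  exact exp_neg_mul_cosh_mul_cosh_le ν hx (le_of_lt ht)

lemma integral_exp_neg_mul_cosh_mul_sinh {x : ℝ} (hx : 0 < x) :
    ∫ t in Ioi 0, exp (-x * cosh t) * sinh t = exp (-x) / x := by
  have hderiv : ∀ t ∈ Ici (0 : ℝ), HasDerivAt (fun t => -exp (-x * cosh t) / x)
      (exp (-x * cosh t) * sinh t) t := by
    intro t _
    refine (((hasDerivAt_cosh t).const_mul (-x)).exp.fun_neg.div_const x).congr_deriv ?_
    field_simp
  have hlim : Tendsto (fun t => -exp (-x * cosh t) / x) atTop (nhds 0) := by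
    simpa using ((tendsto_exp_atBot.comp
      (tendsto_cosh_atTop.const_mul_atTop_of_neg (neg_neg_of_pos hx))).neg.div_const x)
  rw [integral_Ioi_of_hasDerivAt_of_nonneg' hderiv
    (fun t ht => mul_nonneg (exp_pos _).le (sinh_nonneg_iff.2 (le_of_lt ht))) hlim]
  simp [neg_div]

lemma exp_neg_div_le_besselK {ν x : ℝ} (hν : 1 ≤ |ν|) (hx : 0 < x) :
    exp (-x) / x ≤ besselK ν x := by
  rw [← integral_exp_neg_mul_cosh_mul_sinh hx, besselK]
  refine integral_mono_of_nonneg ?_ (integrableOn_exp_neg_mul_cosh_mul_cosh ν hx) ?_ <;>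
    filter_upwards [ae_restrict_mem measurableSet_Ioi] with t ht
  · exact mul_nonneg (exp_pos _).le (sinh_nonneg_iff.2 (le_of_lt ht))
  · have hcosh : cosh t ≤ cosh (ν * t) := by
      rw [cosh_le_cosh, abs_mul]
      exact le_mul_of_one_le_left (abs_nonneg t) hν
    exact mul_le_mul_of_nonneg_left ((sinh_lt_cosh t).le.trans hcosh) (exp_pos _).le

lemma not_integrableOn_Ioi_zero_of_mul_inv_le {f : ℝ → ℝ} {c b : ℝ} (hc : 0 < c) (hb : 0 < b)
    (hf : ∀ r ∈ Ioc 0 b, c * r⁻¹ ≤ f r) : ¬ IntegrableOn f (Ioi 0) := by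
  intro h
  have hcinv : IntegrableOn (fun r => c * r⁻¹) (Ioc 0 b) := by
    refine (h.mono_set Ioc_subset_Ioi_self).mono' (by fun_prop) ?_
    filter_upwards [ae_restrict_mem measurableSet_Ioc] with r hr
    rw [norm_of_nonneg (mul_nonneg hc.le (inv_nonneg.2 hr.1.le))]
    exact hf r hr
  have hinv : IntervalIntegrable (fun r => r⁻¹) volume 0 b := by
    rw [intervalIntegrable_iff_integrableOn_Ioc_of_le hb.le]
    simpa [IntegrableOn, hc.ne'] using hcinv.const_mul c⁻¹
  simp [hb.ne] at hinv

theorem stmt_13 (j κ : ℝ) (hj : 1 ≤ |j|) (hκ : 0 < κ) :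
    ¬ MeasureTheory.IntegrableOn (fun r : ℝ => (besselK |j| (κ * r)) ^ 2 * r)
      (Set.Ioi 0) := by
  refine not_integrableOn_Ioi_zero_of_mul_inv_le (c := (exp (-1) / κ) ^ 2) (b := 1 / κ)
    (by positivity) (by positivity) fun r ⟨hr, hrκ⟩ => ?_
  have hκr : 0 < κ * r := mul_pos hκ hr
  have hκr_le : κ * r ≤ 1 := by rwa [le_div_iff₀' hκ] at hrκ
  have hK : exp (-1) / (κ * r) ≤ besselK |j| (κ * r) :=
    (div_le_div_of_nonneg_right (exp_le_exp.2 (neg_le_neg hκr_le)) hκr.le).trans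
      (exp_neg_div_le_besselK (by rwa [abs_abs]) hκr)
  calc (exp (-1) / κ) ^ 2 * r⁻¹ = (exp (-1) / (κ * r)) ^ 2 * r := by
        field_simp
    _ ≤ besselK |j| (κ * r) ^ 2 * r := by gcongr
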